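/- arXiv:1311.2246 — 4 statements merged into one kernel-verified Lean document; each statement's English description precedes it below -/
import Mathlib

section
/- Let X be a countable set, Φ an N-function of class Δ₂(0), and Ψ its complementary N-function. If f : X → ℝ satisfies ∑_{x∈X} Φ(f(x)) < ∞, then ∑_{x∈X} Ψ(Φ'(|f(x)|)) < ∞. -/
open MeasureTheory Filter Topology

/-- `Φ` is an N-function with right derivative `φ`. -/
structure IsNFunction (Φ φ : ℝ → ℝ) : Prop where
  repr : ∀ x : ℝ, Φ x = ∫ t in (0:ℝ)..|x|, φ t
  mono : MonotoneOn φ (Set.Ici (0:ℝ))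
  rightCont : ∀ t : ℝ, 0 ≤ t → ContinuousWithinAt φ (Set.Ici t) t
  zero : φ 0 = 0
  pos : ∀ t : ℝ, 0 < t → 0 < φ t
  tendsto_top : Tendsto φ atTop atTop

/-- Generalized right inverse of `φ`: `(Φ')⁻¹(x) = sup {t : Φ'(t) ≤ x}`. -/
noncomputable def genInv (φ : ℝ → ℝ) (x : ℝ) : ℝ :=
  sSup {t : ℝ | 0 ≤ t ∧ φ t ≤ x}

/-- The complementary N-function `Ψ(x) = ∫₀ˣ (Φ')⁻¹(t) dt`. -/
noncomputable def complementary (φ : ℝ → ℝ) (b : ℝ) : ℝ :=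
  ∫ t in (0:ℝ)..b, genInv φ t

section Aux

variable {Φ φ : ℝ → ℝ} (hΦ : IsNFunction Φ φ)
include hΦ

lemma phi_nonneg (t : ℝ) (ht : 0 ≤ t) : 0 ≤ φ t := by
  have := hΦ.mono (Set.self_mem_Ici) (Set.mem_Ici.2 ht) ht
  rwa [hΦ.zero] at this

lemma phi_intInt {a b : ℝ} (ha : 0 ≤ a) (hb : a ≤ b) :
    IntervalIntegrable φ volume a b := by
  have : MonotoneOn φ (Set.uIcc a b) := by
    apply hΦ.mono.mono
    rw [Set.uIcc_of_le hb]
    exact fun t ht => le_trans ha ht.1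
  exact this.intervalIntegrable

lemma bddAbove_genSet (x : ℝ) : BddAbove {t : ℝ | 0 ≤ t ∧ φ t ≤ x} := by
  obtain ⟨M, hM⟩ := (hΦ.tendsto_top.eventually_gt_atTop x).exists_forall_of_atTop
  exact ⟨M, fun s hs => le_of_not_gt fun h => absurd hs.2 (not_le.2 (hM s h.le))⟩

lemma genInv_nonneg (x : ℝ) (hx : 0 ≤ x) : 0 ≤ genInv φ x :=
  le_csSup (bddAbove_genSet hΦ x) ⟨le_refl 0, by rw [hΦ.zero]; exact hx⟩

lemma genInv_le {a x : ℝ} (ha : 0 ≤ a) (hx : x < φ a) : genInv φ x ≤ a := by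
  apply Real.sSup_le _ ha
  intro s hs
  by_contra h
  push_neg at h
  exact absurd (le_trans (hΦ.mono (Set.mem_Ici.2 ha) (Set.mem_Ici.2 hs.1) h.le) hs.2)
    (not_le.2 hx)

lemma genInv_monoOn (b : ℝ) : MonotoneOn (genInv φ) (Set.Icc 0 b) := by
  intro t ht t' ht' htt'
  apply csSup_le_csSup (bddAbove_genSet hΦ t')
  · exact ⟨0, le_refl 0, by rw [hΦ.zero]; exact ht.1⟩
  · exact fun s hs => ⟨hs.1, le_trans hs.2 htt'⟩

lemma comp_le_mul (a : ℝ) (ha : 0 ≤ a) : complementary φ (φ a) ≤ a * φ a := by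
  have hφa : 0 ≤ φ a := phi_nonneg hΦ a ha
  have hint : IntervalIntegrable (genInv φ) volume 0 (φ a) := by
    have : MonotoneOn (genInv φ) (Set.uIcc 0 (φ a)) := by
      rw [Set.uIcc_of_le hφa]; exact genInv_monoOn hΦ (φ a)
    exact this.intervalIntegrable
  have h1 : ∀ᵐ t ∂(volume.restrict (Set.Icc 0 (φ a))), t ≠ φ a := by
    apply ae_restrict_of_ae
    rw [ae_iff]
    simp only [not_not]
    have : {t : ℝ | t = φ a} = {φ a} := rfl
    rw [this]
    exact measure_singleton _
  have hb : ∀ᵐ t ∂(volume.restrict (Set.Icc 0 (φ a))), genInv φ t ≤ a := by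
    filter_upwards [ae_restrict_mem measurableSet_Icc, h1] with t ht hne
    exact genInv_le hΦ ha (lt_of_le_of_ne ht.2 hne)
  have := intervalIntegral.integral_mono_ae_restrict hφa hint
    (intervalIntegrable_const (c := a)) hb
  calc complementary φ (φ a) ≤ ∫ _ in (0:ℝ)..(φ a), a := this
    _ = a * φ a := by rw [intervalIntegral.integral_const, smul_eq_mul]; ring

lemma mul_le_Phi (a : ℝ) (ha : 0 ≤ a) : a * φ a ≤ Φ (2 * a) := by
  have h2a : (0:ℝ) ≤ 2 * a := by linarith
  have habs : |2 * a| = 2 * a := abs_of_nonneg h2a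
  rw [hΦ.repr, habs]
  have i1 : IntervalIntegrable φ volume 0 a := phi_intInt hΦ le_rfl ha
  have i2 : IntervalIntegrable φ volume a (2 * a) := phi_intInt hΦ ha (by linarith)
  rw [← intervalIntegral.integral_add_adjacent_intervals i1 i2]
  have h1 : (0:ℝ) ≤ ∫ t in (0:ℝ)..a, φ t :=
    intervalIntegral.integral_nonneg ha (fun u hu => phi_nonneg hΦ u hu.1)
  have h2 : a * φ a ≤ ∫ t in a..(2 * a), φ t := by
    have : ∫ _ in a..(2 * a), φ a ≤ ∫ t in a..(2 * a), φ t := by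
      apply intervalIntegral.integral_mono_on (by linarith)
        (intervalIntegrable_const) i2
      intro t ht
      exact hΦ.mono (Set.mem_Ici.2 ha) (Set.mem_Ici.2 (le_trans ha ht.1)) ht.1
    calc a * φ a = ∫ _ in a..(2 * a), φ a := by
          rw [intervalIntegral.integral_const, smul_eq_mul]; ring
      _ ≤ _ := this
  linarith

lemma comp_nonneg (b : ℝ) (hb : 0 ≤ b) : 0 ≤ complementary φ b :=
  intervalIntegral.integral_nonneg hb (fun u hu => genInv_nonneg hΦ u hu.1)

lemma Phi_even (x : ℝ) : Φ x = Φ |x| := by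
  rw [hΦ.repr, hΦ.repr, abs_abs]

lemma Phi_mono {s t : ℝ} (hs : 0 ≤ s) (hst : s ≤ t) : Φ s ≤ Φ t := by
  rw [hΦ.repr, hΦ.repr, abs_of_nonneg hs, abs_of_nonneg (le_trans hs hst)]
  have i1 : IntervalIntegrable φ volume 0 s := phi_intInt hΦ le_rfl hs
  have i2 : IntervalIntegrable φ volume s t := phi_intInt hΦ hs hst
  rw [← intervalIntegral.integral_add_adjacent_intervals i1 i2]
  have : (0:ℝ) ≤ ∫ u in s..t, φ u :=
    intervalIntegral.integral_nonneg hst (fun u hu => phi_nonneg hΦ u (le_trans hs hu.1))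
  linarith

lemma Phi_pos (t : ℝ) (ht : 0 < t) : 0 < Φ t := by
  rw [hΦ.repr, abs_of_nonneg ht.le]
  have i1 : IntervalIntegrable φ volume 0 (t / 2) := phi_intInt hΦ le_rfl (by linarith)
  have i2 : IntervalIntegrable φ volume (t / 2) t := phi_intInt hΦ (by linarith) (by linarith)
  rw [← intervalIntegral.integral_add_adjacent_intervals i1 i2]
  have h1 : (0:ℝ) ≤ ∫ u in (0:ℝ)..(t / 2), φ u :=
    intervalIntegral.integral_nonneg (by linarith) (fun u hu => phi_nonneg hΦ u hu.1)
  have h2 : 0 < ∫ u in (t / 2)..t, φ u := by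
    have hc : ∫ _ in (t / 2)..t, φ (t / 2) ≤ ∫ u in (t / 2)..t, φ u := by
      apply intervalIntegral.integral_mono_on (by linarith) intervalIntegrable_const i2
      intro u hu
      exact hΦ.mono (Set.mem_Ici.2 (by linarith)) (Set.mem_Ici.2 (by linarith [hu.1])) hu.1
    have hpos : 0 < φ (t / 2) := hΦ.pos _ (by linarith)
    have : (0:ℝ) < ∫ _ in (t / 2)..t, φ (t / 2) := by
      rw [intervalIntegral.integral_const]
      have : (0:ℝ) < t - t / 2 := by linarith
      positivity
    linarith
  linarith

end Aux

theorem orlicz_class_deriv_summable {X : Type*} [Countable X]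
    (Φ φ : ℝ → ℝ) (hΦ : IsNFunction Φ φ)
    (hΔ₂ : ∃ x₀ > (0:ℝ), ∃ K > (2:ℝ), ∀ x : ℝ, 0 ≤ x → x ≤ x₀ → Φ (2 * x) ≤ K * Φ x)
    (f : X → ℝ) (hf : Summable fun x => Φ (f x)) :
    Summable fun x => complementary φ (φ |f x|) := by
  obtain ⟨x₀, hx₀, K, hK, hΔ⟩ := hΔ₂
  have hPhix₀ : 0 < Φ x₀ := Phi_pos hΦ x₀ hx₀
  have hsmall : ∀ᶠ x in cofinite, Φ (f x) < Φ x₀ := by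
    have := hf.tendsto_cofinite_zero
    exact this.eventually (eventually_lt_nhds hPhix₀)
  have hbound : ∀ᶠ x in cofinite,
      complementary φ (φ |f x|) ≤ K * Φ (f x) := by
    filter_upwards [hsmall] with x hx
    have habs : |f x| ≤ x₀ := by
      by_contra h
      push_neg at h
      have : Φ x₀ ≤ Φ |f x| := Phi_mono hΦ hx₀.le h.le
      rw [← Phi_even hΦ] at this
      linarith
    have h0 : (0:ℝ) ≤ |f x| := abs_nonneg _
    calc complementary φ (φ |f x|) ≤ |f x| * φ |f x| := comp_le_mul hΦ _ h0
      _ ≤ Φ (2 * |f x|) := mul_le_Phi hΦ _ h0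
      _ ≤ K * Φ |f x| := hΔ _ h0 habs
      _ = K * Φ (f x) := by rw [← Phi_even hΦ]
  rw [eventually_cofinite] at hbound
  set S : Finset X := hbound.toFinset
  rw [← Finset.summable_compl_iff S]
  apply Summable.of_nonneg_of_le
    (fun x => comp_nonneg hΦ _ (phi_nonneg hΦ _ (abs_nonneg _)))
    (fun x => ?_) (((hf.mul_left K).subtype _))
  have hx : (x : X) ∉ S := by
    have := x.2
    simpa [S] using this
  have : ¬ ¬ complementary φ (φ |f (x : X)|) ≤ K * Φ (f (x : X)) := by
    intro hc
    exact hx (hbound.mem_toFinset.2 hc)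
  exact not_not.1 this
end

section
/- Let G be a finitely generated group with finite generating set S acting freely on a countable set X, and Φ a Δ₂(0)-regular N-function. Then the map α : D^Φ(X)/D^Φ(X)^G → Z¹(G, ℓ^Φ(X)), α(f)(g) = λ_X(g)f − f, is a linear bijection, and it carries the image of ℓ^Φ(X) exactly onto B¹(G, ℓ^Φ(X)); consequently H¹(G, ℓ^Φ(X)) ≅ D^Φ(X)/(ℓ^Φ(X) + D^Φ(X)^G). -/
/-!
Two functions have the same coboundary `g ↦ λ_X(g)f - f` exactly when their difference is
`λ_X`-invariant, i.e. constant on orbits; this gives injectivity and the description of the image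
of `ℓ^Φ(X)`. For surjectivity, freeness yields a map `σ : X → G` with `σ (g • x) = g * σ x`
(coordinates along each orbit relative to a chosen base point), and the cocycle identity shows that
every cocycle `b` is the coboundary of `x ↦ -b (σ x) x`.
-/

open MeasureTheory Filter Topology

variable {G X : Type*}

/-- Membership in the Orlicz space `ℓ^Φ(X)`. -/
def MemOrlicz (Φ : ℝ → ℝ) (f : X → ℝ) : Prop :=
  ∃ a > (0:ℝ), Summable fun x => Φ (a * f x)

/-- The permutation representation: `(λ_X(g) f)(x) = f(g⁻¹ • x)`. -/
def lamX [Group G] [MulAction G X] (g : G) (f : X → ℝ) : X → ℝ :=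
  fun x => f (g⁻¹ • x)

/-- The space of Φ-Dirichlet finite functions `D^Φ(X)`. -/
def MemDPhi [Group G] [MulAction G X] (Φ : ℝ → ℝ) (f : X → ℝ) : Prop :=
  ∀ g : G, MemOrlicz Φ (lamX g f - f)

/-- Functions constant on the `G`-orbits of `X`. -/
def ConstOnOrbits [Group G] [MulAction G X] (f : X → ℝ) : Prop :=
  ∀ (g : G) (x : X), f (g • x) = f x

section

variable [Group G] [MulAction G X]

lemma lamX_sub (g : G) (f f' : X → ℝ) : lamX g (f - f') = lamX g f - lamX g f' := rfl

lemma constOnOrbits_iff_forall_lamX_eq {w : X → ℝ} :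
    ConstOnOrbits (G := G) w ↔ ∀ g : G, lamX g w = w :=
  ⟨fun hw g => funext fun x => hw g⁻¹ x,
    fun hw g x => by simpa [lamX] using (congrFun (hw g) (g • x)).symm⟩

lemma lamX_sub_self_eq_iff {f f' : X → ℝ} :
    (∀ g : G, lamX g f - f = lamX g f' - f') ↔ ConstOnOrbits (G := G) (f - f') := by
  rw [constOnOrbits_iff_forall_lamX_eq]
  refine forall_congr' fun g => ?_
  rw [lamX_sub, sub_eq_sub_iff_sub_eq_sub]

lemma smul_left_injective_of_free (hfree : ∀ g : G, (∃ x : X, g • x = x) → g = 1)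
    {a b : G} {y : X} (h : a • y = b • y) : a = b :=
  inv_mul_eq_one.mp (hfree _ ⟨y, by rw [mul_smul, ← h, inv_smul_smul]⟩)

lemma exists_equivariant_of_free (hfree : ∀ g : G, (∃ x : X, g • x = x) → g = 1) :
    ∃ σ : X → G, ∀ (g : G) (x : X), σ (g • x) = g * σ x := by
  let base : X → X := fun x => (Quotient.mk (MulAction.orbitRel G X) x).out
  have base_smul (g : G) (x : X) : base (g • x) = base x :=
    congrArg Quotient.out (Quotient.sound (MulAction.mem_orbit x g))
  have mem_orbit_base (x : X) : ∃ g : G, g • base x = x :=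
    (MulAction.orbitRel G X).symm (Quotient.mk_out (s := MulAction.orbitRel G X) x)
  choose σ hσ using mem_orbit_base
  refine ⟨σ, fun g x => smul_left_injective_of_free hfree (y := base x) ?_⟩
  rw [← base_smul g x, hσ, mul_smul, base_smul, hσ]

lemma cocycle_eq_lamX_sub_of_equivariant {σ : X → G} (hσ : ∀ (g : G) (x : X), σ (g • x) = g * σ x)
    {b : G → X → ℝ} (hb : ∀ g h : G, b (g * h) = b g + lamX g (b h)) (g : G) :
    b g = lamX g (fun x => -b (σ x) x) - fun x => -b (σ x) x := by
  funext x
  have hcoc := congrFun (hb g (g⁻¹ * σ x)) x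
  simp only [mul_inv_cancel_left, Pi.add_apply, lamX] at hcoc
  simp only [Pi.sub_apply, lamX, hσ]
  linarith

end

theorem dirichlet_cocycle_correspondence_general
    [Group G] [MulAction G X]
    (hfree : ∀ g : G, (∃ x : X, g • x = x) → g = 1)
    (Φ : ℝ → ℝ) :
    -- α is injective modulo D^Φ(X)^G
    (∀ f₁ f₂ : X → ℝ, MemDPhi (G := G) Φ f₁ → MemDPhi (G := G) Φ f₂ →
      (∀ g : G, lamX g f₁ - f₁ = lamX g f₂ - f₂) → ConstOnOrbits (G := G) (f₁ - f₂)) ∧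
    -- α is surjective onto Z¹(G, ℓ^Φ(X))
    (∀ b : G → X → ℝ, (∀ g : G, MemOrlicz Φ (b g)) →
      (∀ g h : G, b (g * h) = b g + lamX g (b h)) →
      ∃ f : X → ℝ, MemDPhi (G := G) Φ f ∧ ∀ g : G, b g = lamX g f - f) ∧
    -- α carries (the image of) ℓ^Φ(X) exactly onto B¹(G, ℓ^Φ(X))
    (∀ f : X → ℝ, MemDPhi (G := G) Φ f →
      ((∃ v : X → ℝ, MemOrlicz Φ v ∧ ∀ g : G, lamX g f - f = lamX g v - v) ↔
        ∃ u w : X → ℝ, MemOrlicz Φ u ∧ ConstOnOrbits (G := G) w ∧ f = u + w)) := by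
  refine ⟨fun f₁ f₂ _ _ h => lamX_sub_self_eq_iff.mp h, fun b hb hcoc => ?_, fun f _ => ⟨?_, ?_⟩⟩
  · obtain ⟨σ, hσ⟩ := exists_equivariant_of_free hfree
    have hcob := cocycle_eq_lamX_sub_of_equivariant hσ hcoc
    exact ⟨_, fun g => hcob g ▸ hb g, hcob⟩
  · rintro ⟨v, hv, hcob⟩
    exact ⟨v, f - v, hv, lamX_sub_self_eq_iff.mp hcob, (add_sub_cancel v f).symm⟩
  · rintro ⟨u, w, hu, hw, rfl⟩
    exact ⟨u, hu, lamX_sub_self_eq_iff.mpr (by rwa [add_sub_cancel_left])⟩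

theorem dirichlet_cocycle_correspondence
    [Group G] [MulAction G X] [Countable X]
    (S : Finset G) (hgen : Subgroup.closure (S : Set G) = ⊤)
    (hfree : ∀ g : G, (∃ x : X, g • x = x) → g = 1)
    (Φ φ : ℝ → ℝ) (hΦ : IsNFunction Φ φ)
    (hΔ₂ : ∃ x₀ > (0:ℝ), ∃ K > (2:ℝ), ∀ x : ℝ, 0 ≤ x → x ≤ x₀ → Φ (2 * x) ≤ K * Φ x) :
    -- α is injective modulo D^Φ(X)^G
    (∀ f₁ f₂ : X → ℝ, MemDPhi (G := G) Φ f₁ → MemDPhi (G := G) Φ f₂ →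
      (∀ g : G, lamX g f₁ - f₁ = lamX g f₂ - f₂) → ConstOnOrbits (G := G) (f₁ - f₂)) ∧
    -- α is surjective onto Z¹(G, ℓ^Φ(X))
    (∀ b : G → X → ℝ, (∀ g : G, MemOrlicz Φ (b g)) →
      (∀ g h : G, b (g * h) = b g + lamX g (b h)) →
      ∃ f : X → ℝ, MemDPhi (G := G) Φ f ∧ ∀ g : G, b g = lamX g f - f) ∧
    -- α carries (the image of) ℓ^Φ(X) exactly onto B¹(G, ℓ^Φ(X))
    (∀ f : X → ℝ, MemDPhi (G := G) Φ f →
      ((∃ v : X → ℝ, MemOrlicz Φ v ∧ ∀ g : G, lamX g f - f = lamX g v - v) ↔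
        ∃ u w : X → ℝ, MemOrlicz Φ u ∧ ConstOnOrbits (G := G) w ∧ f = u + w)) :=
  dirichlet_cocycle_correspondence_general hfree Φ
end

section
/- Let Φ be a continuously differentiable strictly convex Δ₂(0)-regular N-function and G a finitely generated group (generating set S) acting on a countable set X. For f₁, f₂ ∈ D^Φ(X): f₁ − f₂ is constant on every G-orbit if and only if ⟨Δ_Φ f₁, f₁ − f₂⟩ = ⟨Δ_Φ f₂, f₁ − f₂⟩. -/
/-! Strict convexity makes `Φ'` strictly increasing, so each summand `(Φ' a - Φ' b) * (a - b)` of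
the difference of the two pairings is nonnegative and vanishes only when `a = b`. Equal pairings
therefore force every increment of `f₁ - f₂` along a generator to vanish, i.e. invariance under `S`
and hence under `G`. The Δ₂ condition is what makes the pairings converge: it upgrades Orlicz
membership of the increments to summability of `Φ (2 * ·)`, which dominates the summands through
the Young-type bound `|Φ' a * c| ≤ Φ (2 * a) + Φ (2 * c)`. -/

open MeasureTheory Filter Topology

variable {G X : Type*}

open Set

section EvenConvex

variable {Φ : ℝ → ℝ}

lemma ConvexOn.le_of_abs_le_of_even (hconv : ConvexOn ℝ univ Φ) (heven : Function.Even Φ)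
    {a b : ℝ} (hab : |a| ≤ |b|) : Φ a ≤ Φ b := by
  have ha : a ∈ segment ℝ (-|b|) |b| := by
    rw [segment_eq_Icc (neg_le_self (abs_nonneg b))]
    exact abs_le.1 hab
  calc Φ a ≤ max (Φ (-|b|)) (Φ |b|) := hconv.le_on_segment trivial trivial ha
    _ = Φ b := by
      rw [heven, max_self]
      rcases abs_choice b with h | h <;> rw [h]
      exact heven b

lemma StrictConvexOn.pos_of_even (hconv : StrictConvexOn ℝ univ Φ) (heven : Function.Even Φ)
    (h0 : Φ 0 = 0) {t : ℝ} (ht : t ≠ 0) : 0 < Φ t := by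
  have := hconv.2 (mem_univ t) (mem_univ (-t)) (by contrapose! ht; linarith)
    (by norm_num : (0 : ℝ) < 1 / 2) (by norm_num : (0 : ℝ) < 1 / 2) (by norm_num)
  simp only [smul_eq_mul, heven t] at this
  rw [show 1 / 2 * t + 1 / 2 * -t = 0 by ring, h0] at this
  linarith

lemma ConvexOn.add_deriv_mul_le (hconv : ConvexOn ℝ univ Φ) {a : ℝ}
    (hd : DifferentiableAt ℝ Φ a) (d : ℝ) : Φ a + deriv Φ a * d ≤ Φ (a + d) := by
  rcases lt_trichotomy d 0 with h | rfl | h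
  · have := hconv.slope_le_deriv trivial trivial (by linarith : a + d < a) hd
    rw [slope_def_field, div_le_iff₀ (by linarith)] at this
    linarith
  · simp
  · have := hconv.deriv_le_slope trivial trivial (by linarith : a < a + d) hd
    rw [slope_def_field, le_div_iff₀ (by linarith)] at this
    linarith

lemma ConvexOn.abs_deriv_mul_le_of_even (hconv : ConvexOn ℝ univ Φ) (heven : Function.Even Φ)
    (hnn : ∀ t, 0 ≤ Φ t) {a : ℝ} (hd : DifferentiableAt ℝ Φ a) (c : ℝ) :
    |deriv Φ a * c| ≤ Φ (2 * a) + Φ (2 * c) := by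
  -- tangent line at `a` in a direction `d = ±c`, then midpoint convexity between `2 * a`, `2 * d`
  obtain ⟨d, hdc, hd_eq⟩ : ∃ d, |d| = |c| ∧ deriv Φ a * d = |deriv Φ a * c| := by
    rcases le_total 0 (deriv Φ a * c) with h | h
    · exact ⟨c, rfl, (abs_of_nonneg h).symm⟩
    · exact ⟨-c, abs_neg c, by rw [abs_of_nonpos h]; ring⟩
  have hmid : Φ (a + d) ≤ (Φ (2 * a) + Φ (2 * d)) / 2 := by
    have := hconv.2 (mem_univ (2 * a)) (mem_univ (2 * d))
      (by norm_num : (0 : ℝ) ≤ 1 / 2) (by norm_num : (0 : ℝ) ≤ 1 / 2) (by norm_num)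
    simp only [smul_eq_mul] at this
    rw [show 1 / 2 * (2 * a) + 1 / 2 * (2 * d) = a + d by ring] at this
    linarith
  have h2d : Φ (2 * d) = Φ (2 * c) := by
    have : |2 * d| = |2 * c| := by rw [abs_mul, abs_mul, hdc]
    exact le_antisymm (hconv.le_of_abs_le_of_even heven this.le)
      (hconv.le_of_abs_le_of_even heven this.ge)
  linarith [hconv.add_deriv_mul_le hd d, hnn a, hnn (2 * a), hnn (2 * c)]

lemma ConvexOn.summable_deriv_mul_of_even {X : Type*} (hconv : ConvexOn ℝ univ Φ)
    (heven : Function.Even Φ) (hnn : ∀ t, 0 ≤ Φ t) (hdiff : Differentiable ℝ Φ) {u v : X → ℝ}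
    (hu : Summable fun x => Φ (2 * u x)) (hv : Summable fun x => Φ (2 * v x)) :
    Summable fun x => deriv Φ (u x) * v x :=
  (hu.add hv).of_norm_bounded fun _ => hconv.abs_deriv_mul_le_of_even heven hnn (hdiff _) _

end EvenConvex

section DeltaTwo

variable {X : Type*} {Φ : ℝ → ℝ} {x₀ K : ℝ}

lemma summable_comp_two_mul_of_deltaTwo (hmono : ∀ {a b : ℝ}, |a| ≤ |b| → Φ a ≤ Φ b)
    (hnn : ∀ t, 0 ≤ Φ t) (hpos : ∀ t ≠ 0, 0 < Φ t) (hx₀ : 0 < x₀)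
    (hΔ₂ : ∀ x, 0 ≤ x → x ≤ x₀ → Φ (2 * x) ≤ K * Φ x) {h : X → ℝ}
    (hh : Summable fun x => Φ (h x)) : Summable fun x => Φ (2 * h x) := by
  have habs : ∀ t, Φ |t| = Φ t := fun t => le_antisymm (hmono (abs_abs t).le) (hmono (abs_abs t).ge)
  refine (hh.mul_left K).of_norm_bounded_eventually ?_
  filter_upwards [hh.tendsto_cofinite_zero.eventually_lt_const (hpos x₀ hx₀.ne')] with x hx
  have hsmall : |h x| ≤ x₀ := by
    by_contra! hbig
    exact (hmono (by rw [abs_of_pos hx₀]; exact hbig.le : |x₀| ≤ |h x|)).not_gt hx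
  calc ‖Φ (2 * h x)‖ = Φ (2 * |h x|) := by
        rw [Real.norm_of_nonneg (hnn _), ← habs, abs_mul, abs_two]
    _ ≤ K * Φ |h x| := hΔ₂ _ (abs_nonneg _) hsmall
    _ = K * Φ (h x) := by rw [habs]

lemma MemOrlicz.summable_comp_mul_of_deltaTwo (hmono : ∀ {a b : ℝ}, |a| ≤ |b| → Φ a ≤ Φ b)
    (hnn : ∀ t, 0 ≤ Φ t) (hpos : ∀ t ≠ 0, 0 < Φ t) (hx₀ : 0 < x₀)
    (hΔ₂ : ∀ x, 0 ≤ x → x ≤ x₀ → Φ (2 * x) ≤ K * Φ x) {h : X → ℝ}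
    (hh : MemOrlicz Φ h) (c : ℝ) : Summable fun x => Φ (c * h x) := by
  obtain ⟨α, hα, hs⟩ := hh
  have hpow : ∀ n : ℕ, Summable fun x => Φ (2 ^ n * (α * h x)) := by
    intro n
    induction n with
    | zero => simpa using hs
    | succ n ih =>
      simpa [pow_succ', mul_assoc] using
        summable_comp_two_mul_of_deltaTwo hmono hnn hpos hx₀ hΔ₂ ih
  obtain ⟨n, hn⟩ := pow_unbounded_of_one_lt (|c| / α) one_lt_two
  have hc : |c| ≤ 2 ^ n * α := by
    rw [div_lt_iff₀ hα] at hn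
    exact hn.le
  refine .of_nonneg_of_le (fun x => hnn _) (fun x => hmono ?_) (hpow n)
  rw [abs_mul, abs_mul, abs_mul, abs_of_pos hα, abs_of_pos (by positivity : (0 : ℝ) < 2 ^ n),
    ← mul_assoc]
  exact mul_le_mul_of_nonneg_right hc (abs_nonneg _)

end DeltaTwo

lemma Monotone.mul_sub_le_mul_sub {g : ℝ → ℝ} (hg : Monotone g) (a b : ℝ) :
    g b * (a - b) ≤ g a * (a - b) := by
  rw [← sub_nonneg, ← sub_mul]
  rcases le_total b a with h | h
  · exact mul_nonneg (sub_nonneg.2 (hg h)) (sub_nonneg.2 h)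
  · exact mul_nonneg_of_nonpos_of_nonpos (sub_nonpos.2 (hg h)) (sub_nonpos.2 h)

lemma StrictMono.mul_sub_lt_mul_sub {g : ℝ → ℝ} (hg : StrictMono g) {a b : ℝ} (hab : a ≠ b) :
    g b * (a - b) < g a * (a - b) := by
  rw [← sub_pos, ← sub_mul]
  rcases hab.lt_or_gt with h | h
  · exact mul_pos_of_neg_of_neg (sub_neg.2 (hg h)) (sub_neg.2 h)
  · exact mul_pos (sub_pos.2 (hg h)) (sub_pos.2 h)

lemma tsum_sum_mul_sub_eq_iff {ι X : Type*} {S : Finset ι} {g : ℝ → ℝ} (hg : StrictMono g)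
    {u v : ι → X → ℝ} (hu : ∀ s ∈ S, Summable fun x => g (u s x) * (u s x - v s x))
    (hv : ∀ s ∈ S, Summable fun x => g (v s x) * (u s x - v s x)) :
    (∑' x, ∑ s ∈ S, g (u s x) * (u s x - v s x)) = ∑' x, ∑ s ∈ S, g (v s x) * (u s x - v s x) ↔
      ∀ s ∈ S, ∀ x, u s x = v s x := by
  refine ⟨fun heq => ?_, fun h => tsum_congr fun x => Finset.sum_congr rfl fun s hs => by
    rw [h s hs x]⟩
  by_contra! hne
  obtain ⟨s, hs, x, hx⟩ := hne
  refine heq.not_gt (Summable.tsum_lt_tsum (i := x)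
    (fun y => Finset.sum_le_sum fun t _ => hg.monotone.mul_sub_le_mul_sub _ _)
    (Finset.sum_lt_sum (fun t _ => hg.monotone.mul_sub_le_mul_sub _ _)
      ⟨s, hs, hg.mul_sub_lt_mul_sub hx⟩) (summable_sum hv) (summable_sum hu))

lemma constOnOrbits_iff_of_closure_eq_top [Group G] [MulAction G X] {S : Set G}
    (hS : Subgroup.closure S = ⊤) {f : X → ℝ} :
    ConstOnOrbits (G := G) f ↔ ∀ s ∈ S, ∀ x, f (s⁻¹ • x) = f x := by
  let := arrowAction (G := G) (A := X) (B := ℝ)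
  refine ⟨fun hf s _ x => hf s⁻¹ x, fun hf g x => ?_⟩
  have hle : Subgroup.closure S ≤ MulAction.stabilizer G f :=
    (Subgroup.closure_le _).2 fun s hs => funext (hf s hs)
  have : f (g⁻¹⁻¹ • x) = f x := congrFun (hle (hS ▸ Subgroup.mem_top g⁻¹)) x
  rwa [inv_inv] at this

theorem const_on_orbits_iff_pairing_eq_general [Group G] [MulAction G X]
    (S : Finset G) (hgen : Subgroup.closure (S : Set G) = ⊤)
    (Φ φ₀ : ℝ → ℝ) (hΦ : IsNFunction Φ φ₀) (hC1 : ContDiff ℝ 1 Φ)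
    (hconv : StrictConvexOn ℝ Set.univ Φ)
    (hΔ₂ : ∃ x₀ > (0:ℝ), ∃ K > (2:ℝ), ∀ x : ℝ, 0 ≤ x → x ≤ x₀ → Φ (2 * x) ≤ K * Φ x)
    (f₁ f₂ : X → ℝ) (hf₁ : MemDPhi (G := G) Φ f₁) (hf₂ : MemDPhi (G := G) Φ f₂) :
    ConstOnOrbits (G := G) (f₁ - f₂) ↔
      (∑' x : X, ∑ s ∈ S, deriv Φ (f₁ (s⁻¹ • x) - f₁ x) *
          ((f₁ - f₂) (s⁻¹ • x) - (f₁ - f₂) x)) =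
      (∑' x : X, ∑ s ∈ S, deriv Φ (f₂ (s⁻¹ • x) - f₂ x) *
          ((f₁ - f₂) (s⁻¹ • x) - (f₁ - f₂) x)) := by
  have heven : Function.Even Φ := fun x => by rw [hΦ.repr, hΦ.repr, abs_neg]
  have hΦ0 : Φ 0 = 0 := by simp [hΦ.repr]
  have hdiff : Differentiable ℝ Φ := hC1.differentiable one_ne_zero
  have hmono : ∀ {a b : ℝ}, |a| ≤ |b| → Φ a ≤ Φ b := hconv.convexOn.le_of_abs_le_of_even heven
  have hnn : ∀ t, 0 ≤ Φ t := fun t => hΦ0 ▸ hmono (by simp)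
  obtain ⟨x₀, hx₀, K, -, hK⟩ := hΔ₂
  have hincr : ∀ {f : X → ℝ}, MemDPhi (G := G) Φ f → ∀ s : G,
      Summable fun x => Φ (2 * (f (s⁻¹ • x) - f x)) := fun hf s =>
    (hf s).summable_comp_mul_of_deltaTwo hmono hnn (fun _ => hconv.pos_of_even heven hΦ0) hx₀ hK 2
  have hpair : ∀ {f : X → ℝ}, MemDPhi (G := G) Φ f → ∀ s : G, Summable fun x =>
      deriv Φ (f (s⁻¹ • x) - f x) * ((f₁ (s⁻¹ • x) - f₁ x) - (f₂ (s⁻¹ • x) - f₂ x)) := by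
    intro f hf s
    have hsum := fun {v : X → ℝ} =>
      hconv.convexOn.summable_deriv_mul_of_even heven hnn hdiff (v := v) (hincr hf s)
    exact ((hsum (hincr hf₁ s)).sub (hsum (hincr hf₂ s))).congr fun _ => (mul_sub _ _ _).symm
  have hderiv : StrictMono (deriv Φ) :=
    strictMonoOn_univ.1 (hconv.strictMonoOn_deriv fun x _ => hdiff x)
  have key := tsum_sum_mul_sub_eq_iff (S := S) hderiv
    (u := fun s x => f₁ (s⁻¹ • x) - f₁ x) (v := fun s x => f₂ (s⁻¹ • x) - f₂ x)
    (fun s _ => hpair hf₁ s) (fun s _ => hpair hf₂ s)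
  have hfac : ∀ y x : X, (f₁ - f₂) y - (f₁ - f₂) x = (f₁ y - f₁ x) - (f₂ y - f₂ x) :=
    fun _ _ => sub_sub_sub_comm _ _ _ _
  simp only [hfac]
  rw [key, constOnOrbits_iff_of_closure_eq_top hgen]
  simp only [Finset.mem_coe, Pi.sub_apply, sub_eq_sub_iff_sub_eq_sub]

theorem const_on_orbits_iff_pairing_eq [Group G] [MulAction G X] [Countable X]
    (S : Finset G) (hgen : Subgroup.closure (S : Set G) = ⊤)
    (Φ φ₀ : ℝ → ℝ) (hΦ : IsNFunction Φ φ₀) (hC1 : ContDiff ℝ 1 Φ)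
    (hconv : StrictConvexOn ℝ Set.univ Φ)
    (hΔ₂ : ∃ x₀ > (0:ℝ), ∃ K > (2:ℝ), ∀ x : ℝ, 0 ≤ x → x ≤ x₀ → Φ (2 * x) ≤ K * Φ x)
    (f₁ f₂ : X → ℝ) (hf₁ : MemDPhi (G := G) Φ f₁) (hf₂ : MemDPhi (G := G) Φ f₂) :
    ConstOnOrbits (G := G) (f₁ - f₂) ↔
      (∑' x : X, ∑ s ∈ S, deriv Φ (f₁ (s⁻¹ • x) - f₁ x) *
          ((f₁ - f₂) (s⁻¹ • x) - (f₁ - f₂) x)) =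
      (∑' x : X, ∑ s ∈ S, deriv Φ (f₂ (s⁻¹ • x) - f₂ x) *
          ((f₁ - f₂) (s⁻¹ • x) - (f₁ - f₂) x)) :=
  const_on_orbits_iff_pairing_eq_general S hgen Φ φ₀ hΦ hC1 hconv hΔ₂ f₁ f₂ hf₁ hf₂
end

section
/- Let Φ be a continuously differentiable Δ₂(0)-regular N-function, G a finitely generated group with finite generating set S acting on a countable set X, and ρ(f) = ∑_{s∈S} ∑_{x∈X} Φ(f(s⁻¹x) − f(x)) on D^Φ(X). Then for all f, g ∈ D^Φ(X), the one-sided Gâteaux derivative lim_{t→0⁺} (ρ(f + tg) − ρ(f))/t exists and equals ⟨Δ_Φ f, g⟩ = ∑_{x∈X} ∑_{s∈S} Φ'(f(s⁻¹x) − f(x))(g(s⁻¹x) − g(x)). -/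
open MeasureTheory Filter Topology

variable {G X : Type*}

/-- The real-valued modular `ρ(f) = ∑_{s∈S} ∑_{x∈X} Φ(f(s⁻¹x) − f(x))`. -/
noncomputable def dirichletModular' [Group G] [MulAction G X]
    (S : Finset G) (Φ : ℝ → ℝ) (f : X → ℝ) : ℝ :=
  ∑' x : X, ∑ s ∈ S, Φ (f (s⁻¹ • x) - f x)

/-
By the mean value theorem and the monotonicity of `φ`, for `0 < t ≤ 1` the difference quotient
`(Φ (u + t v) - Φ u) / t` is bounded by `φ (|u| + |v|) |v|`, and Young's inequality
`φ w · v ≤ Φ (2 w) + Φ (2 v)` bounds this by `Φ (4 u) + Φ (4 v) + Φ (2 v)`. The `Δ₂(0)` condition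
makes `∑ₓ Φ (c u x)` finite for every `c` as soon as it is finite for one `c > 0`, so for
`u = λ(s) f - f` and `v = λ(s) g - g` these bounds are summable, and dominated convergence gives
the derivative term by term.
-/

lemma DifferentiableAt.tendsto_slope_add_mul {Φ : ℝ → ℝ} {u : ℝ} (h : DifferentiableAt ℝ Φ u)
    (v : ℝ) : Tendsto (fun t => (Φ (u + t * v) - Φ u) / t) (𝓝[≠] 0) (𝓝 (deriv Φ u * v)) := by
  have h' := (h.hasDerivAt.comp_of_eq (0:ℝ) ((hasDerivAt_mul_const v).const_add u)
    (by simp)).tendsto_slope_zero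
  simpa [div_eq_inv_mul] using h'

namespace IsNFunction

variable {Φ φ : ℝ → ℝ}

section Basic

variable (hΦ : IsNFunction Φ φ)
include hΦ

lemma rightDeriv_nonneg {t : ℝ} (ht : 0 ≤ t) : 0 ≤ φ t := by
  simpa [hΦ.zero] using hΦ.mono (Set.mem_Ici.2 le_rfl) ht ht

lemma intervalIntegrable {a b : ℝ} (ha : 0 ≤ a) (hb : 0 ≤ b) :
    IntervalIntegrable φ volume a b :=
  (hΦ.mono.mono fun _ hx => le_trans (le_min ha hb) hx.1).intervalIntegrable

lemma map_abs (x : ℝ) : Φ |x| = Φ x := by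
  rw [hΦ.repr x, hΦ.repr |x|, abs_abs]

lemma map_mul_abs (c x : ℝ) : Φ (c * |x|) = Φ (c * x) := by
  rw [← hΦ.map_abs (c * |x|), ← hΦ.map_abs (c * x), abs_mul, abs_mul, abs_abs]

lemma nonneg (x : ℝ) : 0 ≤ Φ x := by
  rw [hΦ.repr]
  exact intervalIntegral.integral_nonneg (abs_nonneg x) fun t ht => hΦ.rightDeriv_nonneg ht.1

lemma le_of_abs_le {a b : ℝ} (h : |a| ≤ |b|) : Φ a ≤ Φ b := by
  rw [hΦ.repr a, hΦ.repr b, ← intervalIntegral.integral_add_adjacent_intervals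
    (hΦ.intervalIntegrable le_rfl (abs_nonneg a))
    (hΦ.intervalIntegrable (abs_nonneg a) (abs_nonneg b))]
  have : 0 ≤ ∫ t in |a|..|b|, φ t :=
    intervalIntegral.integral_nonneg h fun t ht =>
      hΦ.rightDeriv_nonneg ((abs_nonneg a).trans ht.1)
  linarith

lemma mul_rightDeriv_le {w : ℝ} (hw : 0 ≤ w) : w * φ w ≤ Φ (2 * w) := by
  rw [hΦ.repr, abs_of_nonneg (by linarith), ← intervalIntegral.integral_add_adjacent_intervals
    (hΦ.intervalIntegrable le_rfl hw) (hΦ.intervalIntegrable hw (by linarith))]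
  have h₁ : 0 ≤ ∫ t in (0:ℝ)..w, φ t :=
    intervalIntegral.integral_nonneg hw fun t ht => hΦ.rightDeriv_nonneg ht.1
  have h₂ : ∫ _ in w..(2 * w), φ w ≤ ∫ t in w..(2 * w), φ t :=
    intervalIntegral.integral_mono_on (by linarith) intervalIntegrable_const
      (hΦ.intervalIntegrable hw (by linarith)) fun t ht => hΦ.mono hw (hw.trans ht.1) ht.1
  rw [intervalIntegral.integral_const, smul_eq_mul] at h₂
  linarith

lemma map_pos {c : ℝ} (hc : 0 < c) : 0 < Φ c := by
  have h := hΦ.mul_rightDeriv_le (w := c / 2) (by linarith)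
  rw [show 2 * (c / 2) = c by ring] at h
  nlinarith [hΦ.pos (c / 2) (by linarith)]

lemma map_add_le (a b : ℝ) : Φ (a + b) ≤ Φ (2 * a) + Φ (2 * b) := by
  rcases le_total |a| |b| with h | h
  · have : Φ (a + b) ≤ Φ (2 * b) := hΦ.le_of_abs_le <| by
      rw [abs_mul, abs_two]; linarith [abs_add_le a b]
    linarith [hΦ.nonneg (2 * a)]
  · have : Φ (a + b) ≤ Φ (2 * a) := hΦ.le_of_abs_le <| by
      rw [abs_mul, abs_two]; linarith [abs_add_le a b]
    linarith [hΦ.nonneg (2 * b)]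

lemma rightDeriv_mul_le {w v : ℝ} (hw : 0 ≤ w) (hv : 0 ≤ v) :
    φ w * v ≤ Φ (2 * w) + Φ (2 * v) := by
  rcases le_total v w with h | h
  · nlinarith [hΦ.mul_rightDeriv_le hw, hΦ.nonneg (2 * v), hΦ.rightDeriv_nonneg hw]
  · nlinarith [hΦ.mul_rightDeriv_le hv, hΦ.nonneg (2 * w), hΦ.rightDeriv_nonneg hw,
      hΦ.mono hw hv h]

end Basic

section Derivative

variable (hΦ : IsNFunction Φ φ) (hC1 : ContDiff ℝ 1 Φ)
include hΦ hC1

lemma deriv_eq_rightDeriv {w : ℝ} (hw : 0 ≤ w) : deriv Φ w = φ w := by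
  have hmeas : StronglyMeasurableAtFilter φ (𝓝[Set.Ioi w] w) :=
    ⟨Set.Ioi w, self_mem_nhdsWithin, (aemeasurable_restrict_of_monotoneOn measurableSet_Ioi
      (hΦ.mono.mono fun _ hx => hw.trans (le_of_lt hx))).aestronglyMeasurable⟩
  have hF : HasDerivWithinAt (fun u => ∫ t in (0:ℝ)..u, φ t) (φ w) (Set.Ici w) w :=
    intervalIntegral.integral_hasDerivWithinAt_right (hΦ.intervalIntegrable le_rfl hw) hmeas
      ((hΦ.rightCont w hw).mono Set.Ioi_subset_Ici_self)
  have hΦw : HasDerivWithinAt Φ (φ w) (Set.Ici w) w := by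
    refine hF.congr (fun y hy => ?_) ?_
    · rw [hΦ.repr, abs_of_nonneg (hw.trans hy)]
    · rw [hΦ.repr, abs_of_nonneg hw]
  have hU := uniqueDiffOn_Ici w w Set.self_mem_Ici
  rw [← hΦw.derivWithin hU,
    ((hC1.differentiable one_ne_zero w).hasDerivAt.hasDerivWithinAt).derivWithin hU]

lemma abs_deriv_le_rightDeriv {y w : ℝ} (h : |y| ≤ w) : |deriv Φ y| ≤ φ w := by
  have hw := (abs_nonneg y).trans h
  have heven : (fun x => Φ (-x)) = Φ := funext fun x => by rw [← hΦ.map_abs, abs_neg, hΦ.map_abs]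
  have habs : |deriv Φ y| = φ |y| := by
    rcases le_total 0 y with hy | hy
    · rw [abs_of_nonneg hy, hΦ.deriv_eq_rightDeriv hC1 hy,
        abs_of_nonneg (hΦ.rightDeriv_nonneg hy)]
    · have hy' := neg_nonneg.2 hy
      rw [← heven, deriv_comp_neg, abs_neg, abs_of_nonpos hy, hΦ.deriv_eq_rightDeriv hC1 hy',
        abs_of_nonneg (hΦ.rightDeriv_nonneg hy')]
  rw [habs]
  exact hΦ.mono (abs_nonneg y) hw h

lemma abs_slope_le {u v t : ℝ} (ht : 0 < t) (ht1 : t ≤ 1) :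
    |(Φ (u + t * v) - Φ u) / t| ≤ Φ (4 * u) + Φ (4 * v) + Φ (2 * v) := by
  have hd : Differentiable ℝ Φ := hC1.differentiable one_ne_zero
  obtain ⟨c, hc, hslope⟩ := exists_hasDerivAt_eq_slope (fun r => Φ (u + r * v))
    (fun r => deriv Φ (u + r * v) * v) ht
    (hd.continuous.comp (by fun_prop)).continuousOn
    fun r _ => (hd _).hasDerivAt.comp r ((hasDerivAt_mul_const v).const_add u)
  have hmvt : |(Φ (u + t * v) - Φ u) / t| ≤ φ (|u| + |v|) * |v| := by
    rw [zero_mul, add_zero, sub_zero] at hslope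
    rw [← hslope, abs_mul]
    refine mul_le_mul_of_nonneg_right (hΦ.abs_deriv_le_rightDeriv hC1 ?_) (abs_nonneg v)
    calc |u + c * v| ≤ |u| + |c| * |v| := by rw [← abs_mul]; exact abs_add_le _ _
      _ ≤ |u| + |v| := by
        rw [abs_of_pos hc.1]; nlinarith [abs_nonneg v, hc.2]
  have hyoung := hΦ.rightDeriv_mul_le (add_nonneg (abs_nonneg u) (abs_nonneg v)) (abs_nonneg v)
  have hsplit := hΦ.map_add_le (2 * |u|) (2 * |v|)
  rw [← mul_assoc, ← mul_assoc, show (2:ℝ) * 2 = 4 by norm_num, hΦ.map_mul_abs,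
    hΦ.map_mul_abs] at hsplit
  rw [hΦ.map_mul_abs, mul_add] at hyoung
  linarith

end Derivative

section Summable

variable {ι : Type*} (hΦ : IsNFunction Φ φ)
include hΦ

lemma summable_comp_two_mul {x₀ K : ℝ} (hx₀ : 0 < x₀)
    (hK : ∀ x, 0 ≤ x → x ≤ x₀ → Φ (2 * x) ≤ K * Φ x) {u : ι → ℝ}
    (hu : Summable fun i => Φ (u i)) : Summable fun i => Φ (2 * u i) := by
  have hsmall : ∀ᶠ i in cofinite, Φ (u i) < Φ x₀ :=
    hu.tendsto_cofinite_zero.eventually_lt_const (hΦ.map_pos hx₀)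
  refine (hu.mul_left K).of_norm_bounded_eventually (hsmall.mono fun i hi => ?_)
  have hle : |u i| ≤ x₀ := by
    by_contra! h
    exact hi.not_ge (hΦ.le_of_abs_le (by rw [abs_of_pos hx₀]; exact h.le))
  rw [Real.norm_of_nonneg (hΦ.nonneg _), ← hΦ.map_mul_abs, ← hΦ.map_abs (u i)]
  exact hK _ (abs_nonneg _) hle

lemma summable_comp_mul_of_memOrlicz {x₀ K : ℝ} (hx₀ : 0 < x₀)
    (hK : ∀ x, 0 ≤ x → x ≤ x₀ → Φ (2 * x) ≤ K * Φ x) {u : ι → ℝ} (hu : MemOrlicz Φ u)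
    (c : ℝ) : Summable fun i => Φ (c * u i) := by
  obtain ⟨a, ha, hsum⟩ := hu
  have hpow (n : ℕ) : Summable fun i => Φ (2 ^ n * a * u i) := by
    induction n with
    | zero => simpa using hsum
    | succ n ih =>
      exact (hΦ.summable_comp_two_mul hx₀ hK ih).congr fun i => congrArg Φ (by ring)
  obtain ⟨n, hn⟩ := pow_unbounded_of_one_lt (|c| / a) one_lt_two
  refine (hpow n).of_nonneg_of_le (fun i => hΦ.nonneg _) fun i => hΦ.le_of_abs_le ?_
  rw [abs_mul, abs_mul, abs_of_pos (by positivity : (0:ℝ) < 2 ^ n * a)]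
  gcongr
  exact ((div_lt_iff₀ ha).1 hn).le

variable {u v : ι → ℝ} (hu : ∀ c, Summable fun i => Φ (c * u i))
  (hv : ∀ c, Summable fun i => Φ (c * v i))
include hu hv

lemma summable_comp_add_mul (t : ℝ) : Summable fun i => Φ (u i + t * v i) :=
  ((hu 2).add (hv (2 * t))).of_nonneg_of_le (fun i => hΦ.nonneg _) fun i => by
    simpa only [mul_assoc] using hΦ.map_add_le (u i) (t * v i)

variable (hC1 : ContDiff ℝ 1 Φ)
include hC1

lemma summable_deriv_mul : Summable fun i => deriv Φ (u i) * v i :=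
  ((hu 2).add (hv 2)).of_norm_bounded fun i => by
    rw [norm_mul, Real.norm_eq_abs, Real.norm_eq_abs, ← hΦ.map_mul_abs 2 (u i),
      ← hΦ.map_mul_abs 2 (v i)]
    exact (mul_le_mul_of_nonneg_right (hΦ.abs_deriv_le_rightDeriv hC1 le_rfl)
      (abs_nonneg _)).trans (hΦ.rightDeriv_mul_le (abs_nonneg _) (abs_nonneg _))

theorem tendsto_slope_tsum :
    Tendsto (fun t => (∑' i, Φ (u i + t * v i) - ∑' i, Φ (u i)) / t) (𝓝[>] 0)
      (𝓝 (∑' i, deriv Φ (u i) * v i)) := by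
  have hquot (t : ℝ) : (∑' i, Φ (u i + t * v i) - ∑' i, Φ (u i)) / t =
      ∑' i, (Φ (u i + t * v i) - Φ (u i)) / t := by
    rw [← (hΦ.summable_comp_add_mul hu hv t).tsum_sub (by simpa using hu 1), tsum_div_const]
  simp_rw [hquot]
  refine tendsto_tsum_of_dominated_convergence (((hu 4).add (hv 4)).add (hv 2))
    (fun i => ((hC1.differentiable one_ne_zero (u i)).tendsto_slope_add_mul (v i)).mono_left
      (nhdsGT_le_nhdsNE 0)) ?_
  filter_upwards [Ioc_mem_nhdsGT one_pos] with t ht i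
  exact hΦ.abs_slope_le hC1 ht.1 ht.2

end Summable

end IsNFunction

theorem gateaux_derivative_of_modular_general [Group G] [MulAction G X]
    (S : Finset G)
    (Φ φ₀ : ℝ → ℝ) (hΦ : IsNFunction Φ φ₀) (hC1 : ContDiff ℝ 1 Φ)
    (hΔ₂ : ∃ x₀ > (0:ℝ), ∃ K > (2:ℝ), ∀ x : ℝ, 0 ≤ x → x ≤ x₀ → Φ (2 * x) ≤ K * Φ x)
    (f g : X → ℝ) (hf : MemDPhi (G := G) Φ f) (hg : MemDPhi (G := G) Φ g) :
    Tendsto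
      (fun t : ℝ => (dirichletModular' S Φ (f + t • g) - dirichletModular' S Φ f) / t)
      (𝓝[>] (0:ℝ))
      (𝓝 (∑' x : X, ∑ s ∈ S, deriv Φ (f (s⁻¹ • x) - f x) * (g (s⁻¹ • x) - g x))) := by
  obtain ⟨x₀, hx₀, K, -, hK⟩ := hΔ₂
  have hfS (s : G) := hΦ.summable_comp_mul_of_memOrlicz hx₀ hK (hf s)
  have hgS (s : G) := hΦ.summable_comp_mul_of_memOrlicz hx₀ hK (hg s)
  have hρ (t : ℝ) : dirichletModular' S Φ (f + t • g) =
      ∑ s ∈ S, ∑' x, Φ ((lamX s f - f) x + t * (lamX s g - g) x) := by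
    rw [dirichletModular', ← Summable.tsum_finsetSum fun s _ =>
      hΦ.summable_comp_add_mul (hfS s) (hgS s) t]
    congr! 4 with x s
    simp only [lamX, Pi.add_apply, Pi.sub_apply, Pi.smul_apply, smul_eq_mul]
    ring
  have hρ₀ : dirichletModular' S Φ f = ∑ s ∈ S, ∑' x, Φ ((lamX s f - f) x) := by
    simpa using hρ 0
  have hderiv : ∑' x, ∑ s ∈ S, deriv Φ (f (s⁻¹ • x) - f x) * (g (s⁻¹ • x) - g x) =
      ∑ s ∈ S, ∑' x, deriv Φ ((lamX s f - f) x) * (lamX s g - g) x :=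
    Summable.tsum_finsetSum fun s _ => hΦ.summable_deriv_mul (hfS s) (hgS s) hC1
  rw [hderiv]
  refine (tendsto_finsetSum S fun s _ => hΦ.tendsto_slope_tsum (hfS s) (hgS s) hC1).congr
    fun t => ?_
  rw [hρ, hρ₀, ← Finset.sum_sub_distrib, Finset.sum_div]

theorem gateaux_derivative_of_modular [Group G] [MulAction G X] [Countable X]
    (S : Finset G) (hgen : Subgroup.closure (S : Set G) = ⊤)
    (Φ φ₀ : ℝ → ℝ) (hΦ : IsNFunction Φ φ₀) (hC1 : ContDiff ℝ 1 Φ)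
    (hΔ₂ : ∃ x₀ > (0:ℝ), ∃ K > (2:ℝ), ∀ x : ℝ, 0 ≤ x → x ≤ x₀ → Φ (2 * x) ≤ K * Φ x)
    (f g : X → ℝ) (hf : MemDPhi (G := G) Φ f) (hg : MemDPhi (G := G) Φ g) :
    Tendsto
      (fun t : ℝ => (dirichletModular' S Φ (f + t • g) - dirichletModular' S Φ f) / t)
      (𝓝[>] (0:ℝ))
      (𝓝 (∑' x : X, ∑ s ∈ S, deriv Φ (f (s⁻¹ • x) - f x) * (g (s⁻¹ • x) - g x))) :=
  gateaux_derivative_of_modular_general S Φ φ₀ hΦ hC1 hΔ₂ f g hf hg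
end
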